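/- Suppose S : ℝ² → M₂(ℂ) is smooth with S² = I, and P : ℝ² → M₂(ℂ) satisfies both i·∂S/∂x + [S,[S,P]] = 0 and ∂S/∂t - ∂/∂x[S,P] = 0. Then S satisfies the matrix Heisenberg magnet equation ∂S/∂t = (1/(4i))[S, ∂²S/∂x²]. -/

import Mathlib

/-!
Since `S² = 1`, `S` anticommutes with `[S, P]`, so `[S, [S, P]] = 2 S [S, P]` and the first
equation solves to `[S, P] = -(i/2) S Sₓ`. Hence `Sₜ = ∂ₓ[S, P] = -(i/2) (Sₓ² + S Sₓₓ)`, while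
differentiating `S² = 1` twice gives `Sₓₓ S + 2 Sₓ² + S Sₓₓ = 0`; eliminating `Sₓ²` leaves
`Sₜ = -(i/4) [S, Sₓₓ] = (1/(4i)) [S, Sₓₓ]`.
-/

attribute [local instance] Matrix.normedAddCommGroup Matrix.normedSpace

theorem HasDerivAt.matrix_mul {𝕜 α n : Type*} [NontriviallyNormedField 𝕜] [NormedRing α]
    [NormedAlgebra 𝕜 α] [Fintype n] [DecidableEq n] {f g : 𝕜 → Matrix n n α}
    {f' g' : Matrix n n α} {x : 𝕜} (hf : HasDerivAt f f' x) (hg : HasDerivAt g g' x) :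
    HasDerivAt (fun y => f y * g y) (f' * g x + f x * g') x := by
  let _ := Matrix.linftyOpNormedRing (n := n) (α := α)
  let _ := Matrix.linftyOpNormedAlgebra (n := n) (R := 𝕜) (α := α)
  exact hf.fun_mul hg

theorem HasDerivAt.eq_zero_of_forall_eq {𝕜 F : Type*} [NontriviallyNormedField 𝕜]
    [NormedAddCommGroup F] [NormedSpace 𝕜 F] {f : 𝕜 → F} {f' c : F} {x : 𝕜}
    (hf : HasDerivAt f f' x) (hc : ∀ y, f y = c) : f' = 0 :=
  hf.unique (by simpa only [funext hc] using hasDerivAt_const x c)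

theorem mul_commutator_add_commutator_mul_eq_zero {R : Type*} [Ring R] {S P : R}
    (hS : S * S = 1) : S * (S * P - P * S) + (S * P - P * S) * S = 0 := by
  calc S * (S * P - P * S) + (S * P - P * S) * S = S * S * P - P * (S * S) := by noncomm_ring
    _ = 0 := by rw [hS, one_mul, mul_one, sub_self]

theorem commutator_eq_of_smul_add_commutator_commutator_eq_zero {𝕜 R : Type*} [Field 𝕜]
    [NeZero (2 : 𝕜)] [Ring R] [Algebra 𝕜 R] {S P X : R} {c : 𝕜} (hS : S * S = 1)
    (h : c • X + (S * (S * P - P * S) - (S * P - P * S) * S) = 0) :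
    S * P - P * S = (-(c / 2)) • (S * X) := by
  set C := S * P - P * S
  have hanti := mul_commutator_add_commutator_mul_eq_zero (P := P) hS
  have hSC : S * C = (-(c / 2)) • X := by
    have h2 : (2 : 𝕜) • (S * C) = -(c • X) := by
      rw [two_smul]; linear_combination (norm := abel) h + hanti
    calc S * C = (2 : 𝕜)⁻¹ • (2 : 𝕜) • (S * C) := by
          rw [smul_smul, inv_mul_cancel₀ two_ne_zero, one_smul]
      _ = (-(c / 2)) • X := by rw [h2]; module
  calc C = S * S * C := by rw [hS, one_mul]
    _ = (-(c / 2)) • (S * X) := by rw [mul_assoc, hSC, mul_smul_comm]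

theorem neg_half_smul_eq_quarter_smul_commutator {𝕜 R : Type*} [Field 𝕜] [CharZero 𝕜] [Ring R]
    [Algebra 𝕜 R]
    {A X X₂ : R} (c : 𝕜) (h : X₂ * A + X * X + (X * X + A * X₂) = 0) :
    (-(c / 2)) • (X * X + A * X₂) = (-(c / 4)) • (A * X₂ - X₂ * A) := by
  linear_combination (norm := module) (-(c / 4)) • h

theorem heisenberg_magnet_matrix_form_general
    (S P Sx Sxx St Cx : ℝ → ℝ → Matrix (Fin 2) (Fin 2) ℂ)
    (hS2 : ∀ x t, S x t * S x t = 1)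
    (hSx : ∀ x t, HasDerivAt (fun y => S y t) (Sx x t) x)
    (hSxx : ∀ x t, HasDerivAt (fun y => Sx y t) (Sxx x t) x)
    (hCx : ∀ x t, HasDerivAt
      (fun y => S y t * P y t - P y t * S y t) (Cx x t) x)
    (heq1 : ∀ x t, Complex.I • Sx x t +
      (S x t * (S x t * P x t - P x t * S x t)
        - (S x t * P x t - P x t * S x t) * S x t) = 0)
    (heq2 : ∀ x t, St x t - Cx x t = 0) :
    ∀ x t, St x t = (1 / (4 * Complex.I)) •
      (S x t * Sxx x t - Sxx x t * S x t) := by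
  intro x t
  have hC : ∀ y, S y t * P y t - P y t * S y t = (-(Complex.I / 2)) • (S y t * Sx y t) :=
    fun y => commutator_eq_of_smul_add_commutator_commutator_eq_zero (hS2 y t) (heq1 y t)
  have hSt_eq : St x t = (-(Complex.I / 2)) • (Sx x t * Sx x t + S x t * Sxx x t) := by
    rw [sub_eq_zero.mp (heq2 x t)]
    refine (hCx x t).unique ?_
    rw [funext hC]
    exact ((hSx x t).matrix_mul (hSxx x t)).const_smul (-(Complex.I / 2))
  have hanti : ∀ y, Sx y t * S y t + S y t * Sx y t = 0 := fun y =>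
    ((hSx y t).matrix_mul (hSx y t)).eq_zero_of_forall_eq fun z => hS2 z t
  have hanti_deriv : Sxx x t * S x t + Sx x t * Sx x t + (Sx x t * Sx x t + S x t * Sxx x t) = 0 :=
    (((hSxx x t).matrix_mul (hSx x t)).add ((hSx x t).matrix_mul (hSxx x t))).eq_zero_of_forall_eq
      hanti
  have hI : (1 / (4 * Complex.I)) = -(Complex.I / 4) := by
    field_simp
    simp
  rw [hSt_eq, hI]
  exact neg_half_smul_eq_quarter_smul_commutator _ hanti_deriv

/-- If `S² = I`, `i Sₓ + [S,[S,P]] = 0` and `Sₜ - ∂ₓ[S,P] = 0`, then `S` satisfies the matrix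
Heisenberg magnet equation `Sₜ = (1/(4i))[S, Sₓₓ]`. -/
theorem heisenberg_magnet_matrix_form
    (S P Sx Sxx St Cx : ℝ → ℝ → Matrix (Fin 2) (Fin 2) ℂ)
    (hS2 : ∀ x t, S x t * S x t = 1)
    (hSx : ∀ x t, HasDerivAt (fun y => S y t) (Sx x t) x)
    (hSxx : ∀ x t, HasDerivAt (fun y => Sx y t) (Sxx x t) x)
    (hSt : ∀ x t, HasDerivAt (fun s => S x s) (St x t) t)
    (hCx : ∀ x t, HasDerivAt
      (fun y => S y t * P y t - P y t * S y t) (Cx x t) x)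
    (heq1 : ∀ x t, Complex.I • Sx x t +
      (S x t * (S x t * P x t - P x t * S x t)
        - (S x t * P x t - P x t * S x t) * S x t) = 0)
    (heq2 : ∀ x t, St x t - Cx x t = 0) :
    ∀ x t, St x t = (1 / (4 * Complex.I)) •
      (S x t * Sxx x t - Sxx x t * S x t) :=
  heisenberg_magnet_matrix_form_general S P Sx Sxx St Cx hS2 hSx hSxx hCx heq1 heq2
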